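/- arXiv:2105.03491 — 5 statements merged into one kernel-verified Lean document; each statement's English description precedes it below -/
import Mathlib

section
/- Let K be a semi-homogeneous kernel with parameter ζ, training inputs X = (x₁, …, xₙ) with invertible Gram matrix K(X,X), targets y ∈ ℝⁿ, and predictive function f_K(x) = K(x, X)·K(X,X)⁻¹·y. For x ≠ 0 with ‖x‖ = r, and P(x) = (r̃/r)x with r̃ > 0, it holds that f_K(P(x)) = (r̃/r)·f_K(x) + ζ²(1 − r̃/r)·γ, where γ = 1ₙᵀ·K(X,X)⁻¹·y and 1ₙ is the all-ones vector. -/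
open Matrix

/-- The kernel-regression predictor of a semi-homogeneous kernel at the projection of a point. -/
theorem stmt_2 {d n : ℕ} (K : EuclideanSpace ℝ (Fin d) → EuclideanSpace ℝ (Fin d) → ℝ) (ζ : ℝ)
    (hK : ∀ (x x' : EuclideanSpace ℝ (Fin d)) (α : ℝ), 0 < α →
      K (α • x) x' = α * K x x' + ζ ^ 2 * (1 - α))
    (X : Fin n → EuclideanSpace ℝ (Fin d)) (y : Fin n → ℝ)
    (M : Matrix (Fin n) (Fin n) ℝ) (hM : M = Matrix.of fun i j => K (X i) (X j))
    (hMinv : IsUnit M.det)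
    (f : EuclideanSpace ℝ (Fin d) → ℝ)
    (hf : ∀ x, f x = (fun i => K x (X i)) ⬝ᵥ (M⁻¹ *ᵥ y))
    (γ : ℝ) (hγ : γ = (fun _ => (1 : ℝ)) ⬝ᵥ (M⁻¹ *ᵥ y))
    (x : EuclideanSpace ℝ (Fin d)) (hx : x ≠ 0) (rt : ℝ) (hrt : 0 < rt) :
    f ((rt / ‖x‖) • x) = (rt / ‖x‖) * f x + ζ ^ 2 * (1 - rt / ‖x‖) * γ := by
  have hα : 0 < rt / ‖x‖ := div_pos hrt (norm_pos_iff.mpr hx)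
  simp only [hf, hγ, dotProduct]
  rw [Finset.mul_sum, Finset.mul_sum, ← Finset.sum_add_distrib]
  refine Finset.sum_congr rfl fun i _ => ?_
  rw [hK x (X i) _ hα]
  ring
end

section
/- Let K be a semi-homogeneous kernel with parameter ζ ≠ 0, and suppose the Gram matrix K(X,X) is invertible so that the kernel-regression predictor interpolates: f_K(xᵢ) = yᵢ for all i, where each yᵢ ∈ {−1, +1}. Suppose ‖xᵢ‖ = r₁ when yᵢ = 1 and ‖xᵢ‖ = r₂ when yᵢ = −1, with 0 < r₁ < r₂. Let γ = 1ₙᵀK(X,X)⁻¹y. Then for a training point xᵢ with yᵢ = 1 and its projection P(xᵢ) = (r₂/r₁)xᵢ: f_K(P(xᵢ)) < 0 if and only if γ > r₂/(ζ²(r₂ − r₁)). -/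
open Matrix

/-- Adversarial misclassification criterion for an inner-sphere training point. -/
theorem stmt_3 {d n : ℕ} (K : EuclideanSpace ℝ (Fin d) → EuclideanSpace ℝ (Fin d) → ℝ) (ζ : ℝ)
    (hζ : ζ ≠ 0)
    (hK : ∀ (x x' : EuclideanSpace ℝ (Fin d)) (α : ℝ), 0 < α →
      K (α • x) x' = α * K x x' + ζ ^ 2 * (1 - α))
    (r₁ r₂ : ℝ) (hr₁ : 0 < r₁) (hr₁₂ : r₁ < r₂)
    (X : Fin n → EuclideanSpace ℝ (Fin d)) (y : Fin n → ℝ)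
    (hlab : ∀ i, y i = 1 ∨ y i = -1)
    (hnorm₁ : ∀ i, y i = 1 → ‖X i‖ = r₁)
    (hnorm₂ : ∀ i, y i = -1 → ‖X i‖ = r₂)
    (M : Matrix (Fin n) (Fin n) ℝ) (hM : M = Matrix.of fun i j => K (X i) (X j))
    (hMinv : IsUnit M.det)
    (f : EuclideanSpace ℝ (Fin d) → ℝ)
    (hf : ∀ x, f x = (fun i => K x (X i)) ⬝ᵥ (M⁻¹ *ᵥ y))
    (hinterp : ∀ i, f (X i) = y i)
    (γ : ℝ) (hγ : γ = (fun _ => (1 : ℝ)) ⬝ᵥ (M⁻¹ *ᵥ y))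
    (i : Fin n) (hyi : y i = 1) :
    f ((r₂ / r₁) • X i) < 0 ↔ γ > r₂ / (ζ ^ 2 * (r₂ - r₁)) := by
  have hα : (0:ℝ) < r₂ / r₁ := div_pos (hr₁.trans hr₁₂) hr₁
  have hfv : f ((r₂ / r₁) • X i) = (r₂ / r₁) * f (X i) + ζ ^ 2 * (1 - r₂ / r₁) * γ := by
    rw [hf, hf, hγ]
    simp only [dotProduct, Finset.mul_sum]
    rw [← Finset.sum_add_distrib]
    refine Finset.sum_congr rfl fun j _ => ?_
    rw [hK (X i) (X j) _ hα]
    ring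
  rw [hfv, hinterp i, hyi, mul_one]
  have hz : (0:ℝ) < ζ ^ 2 := lt_of_le_of_ne (sq_nonneg ζ) (Ne.symm (pow_ne_zero 2 hζ))
  have hc : (0:ℝ) < ζ ^ 2 * (r₂ - r₁) := mul_pos hz (by linarith)
  rw [gt_iff_lt, div_lt_iff₀ hc]
  have hkey : r₂ / r₁ + ζ ^ 2 * (1 - r₂ / r₁) * γ = (r₂ - ζ ^ 2 * (r₂ - r₁) * γ) / r₁ := by
    field_simp; ring
  rw [hkey, div_neg_iff]
  constructor
  · rintro (⟨h1, h2⟩ | ⟨h1, h2⟩) <;> nlinarith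
  · intro h; right; constructor <;> nlinarith
end

section
/- Let K be a semi-homogeneous kernel with parameter ζ ≠ 0, training data as in the adversarial spheres setting (yᵢ = 1 iff ‖xᵢ‖ = r₁, yᵢ = −1 iff ‖xᵢ‖ = r₂, 0 < r₁ < r₂), invertible Gram matrix K(X,X), interpolating predictor f_K, and γ = 1ₙᵀK(X,X)⁻¹y. For a training point xᵢ with yᵢ = −1 and its projection P(xᵢ) = (r₁/r₂)xᵢ: f_K(P(xᵢ)) > 0 if and only if γ > r₁/(ζ²(r₂ − r₁)). -/
open Matrix

/-- Adversarial classification criterion for an outer-sphere training point. -/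
theorem stmt_4 {d n : ℕ} (K : EuclideanSpace ℝ (Fin d) → EuclideanSpace ℝ (Fin d) → ℝ) (ζ : ℝ)
    (hζ : ζ ≠ 0)
    (hK : ∀ (x x' : EuclideanSpace ℝ (Fin d)) (α : ℝ), 0 < α →
      K (α • x) x' = α * K x x' + ζ ^ 2 * (1 - α))
    (r₁ r₂ : ℝ) (hr₁ : 0 < r₁) (hr₁₂ : r₁ < r₂)
    (X : Fin n → EuclideanSpace ℝ (Fin d)) (y : Fin n → ℝ)
    (hlab : ∀ i, y i = 1 ∨ y i = -1)
    (hnorm₁ : ∀ i, y i = 1 → ‖X i‖ = r₁)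
    (hnorm₂ : ∀ i, y i = -1 → ‖X i‖ = r₂)
    (M : Matrix (Fin n) (Fin n) ℝ) (hM : M = Matrix.of fun i j => K (X i) (X j))
    (hMinv : IsUnit M.det)
    (f : EuclideanSpace ℝ (Fin d) → ℝ)
    (hf : ∀ x, f x = (fun i => K x (X i)) ⬝ᵥ (M⁻¹ *ᵥ y))
    (hinterp : ∀ i, f (X i) = y i)
    (γ : ℝ) (hγ : γ = (fun _ => (1 : ℝ)) ⬝ᵥ (M⁻¹ *ᵥ y))
    (i : Fin n) (hyi : y i = -1) :
    f ((r₁ / r₂) • X i) > 0 ↔ γ > r₁ / (ζ ^ 2 * (r₂ - r₁)) := by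
  have hr₂ : 0 < r₂ := hr₁.trans hr₁₂
  set α : ℝ := r₁ / r₂ with hαdef
  have hα : 0 < α := div_pos hr₁ hr₂
  have hα1 : α < 1 := (div_lt_one hr₂).mpr hr₁₂
  have hζ2 : (0:ℝ) < ζ ^ 2 := by positivity
  -- compute f at projected point
  have hfP : f (α • X i) = α * f (X i) + ζ ^ 2 * (1 - α) * γ := by
    rw [hf, hf, hγ]
    simp only [dotProduct]
    rw [Finset.mul_sum, Finset.mul_sum, ← Finset.sum_add_distrib]
    apply Finset.sum_congr rfl
    intro j _
    rw [hK _ _ _ hα]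
    ring
  rw [hfP, hinterp, hyi]
  have key : α / (ζ ^ 2 * (1 - α)) = r₁ / (ζ ^ 2 * (r₂ - r₁)) := by
    rw [hαdef]
    field_simp
  have hpos : 0 < ζ ^ 2 * (1 - α) := by
    apply mul_pos hζ2; linarith
  constructor
  · intro h
    rw [← key, gt_iff_lt, div_lt_iff₀ hpos]
    nlinarith
  · intro h
    rw [← key, gt_iff_lt, div_lt_iff₀ hpos] at h
    nlinarith
end

section
/- In the adversarial spheres setting with an interpolating semi-homogeneous kernel predictor (ζ ≠ 0, 0 < r₁ < r₂, yᵢ ∈ {±1} determined by ‖xᵢ‖ ∈ {r₁, r₂}), the adversarial accuracy a_adv = (1/n)·#{i : sgn(f_K(P(xᵢ))) = −yᵢ} takes only one of three values: 0, the fraction of negative-labeled training points, or 1, according to whether γ = 1ₙᵀK(X,X)⁻¹y satisfies γ ≤ r₁/(ζ²(r₂−r₁)), r₁/(ζ²(r₂−r₁)) < γ ≤ r₂/(ζ²(r₂−r₁)), or γ > r₂/(ζ²(r₂−r₁)) respectively (assuming f_K(P(xᵢ)) ≠ 0 at the boundary cases so sgn is well-defined). -/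
open Matrix

/-- Quantization and phase transitions of the adversarial accuracy. -/
theorem stmt_5 {d n : ℕ} (hn : 0 < n)
    (K : EuclideanSpace ℝ (Fin d) → EuclideanSpace ℝ (Fin d) → ℝ) (ζ : ℝ)
    (hζ : ζ ≠ 0)
    (hK : ∀ (x x' : EuclideanSpace ℝ (Fin d)) (α : ℝ), 0 < α →
      K (α • x) x' = α * K x x' + ζ ^ 2 * (1 - α))
    (r₁ r₂ : ℝ) (hr₁ : 0 < r₁) (hr₁₂ : r₁ < r₂)
    (X : Fin n → EuclideanSpace ℝ (Fin d)) (y : Fin n → ℝ)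
    (hlab : ∀ i, y i = 1 ∨ y i = -1)
    (hnorm₁ : ∀ i, y i = 1 → ‖X i‖ = r₁)
    (hnorm₂ : ∀ i, y i = -1 → ‖X i‖ = r₂)
    (M : Matrix (Fin n) (Fin n) ℝ) (hM : M = Matrix.of fun i j => K (X i) (X j))
    (hMinv : IsUnit M.det)
    (f : EuclideanSpace ℝ (Fin d) → ℝ)
    (hf : ∀ x, f x = (fun i => K x (X i)) ⬝ᵥ (M⁻¹ *ᵥ y))
    (hinterp : ∀ i, f (X i) = y i)
    (γ : ℝ) (hγ : γ = (fun _ => (1 : ℝ)) ⬝ᵥ (M⁻¹ *ᵥ y))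
    (P : Fin n → EuclideanSpace ℝ (Fin d))
    (hP : ∀ i, P i = if y i = 1 then (r₂ / r₁) • X i else (r₁ / r₂) • X i)
    (hnz : ∀ i, f (P i) ≠ 0)
    (a : ℝ)
    (ha : a = ((Finset.univ.filter fun i => Real.sign (f (P i)) = -(y i)).card : ℝ) / n) :
    (γ ≤ r₁ / (ζ ^ 2 * (r₂ - r₁)) → a = 0) ∧
    (r₁ / (ζ ^ 2 * (r₂ - r₁)) < γ ∧ γ ≤ r₂ / (ζ ^ 2 * (r₂ - r₁)) →
      a = ((Finset.univ.filter fun i => y i = -1).card : ℝ) / n) ∧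
    (r₂ / (ζ ^ 2 * (r₂ - r₁)) < γ → a = 1) := by
  set v : Fin n → ℝ := M⁻¹ *ᵥ y with hv
  have hc : 0 < ζ ^ 2 * (r₂ - r₁) := by
    have h1 : 0 < ζ ^ 2 := by positivity
    exact mul_pos h1 (sub_pos.2 hr₁₂)
  have hγsum : γ = ∑ j, v j := by
    rw [hγ]; simp [dotProduct]
  have hfx : ∀ i, ∑ j, K (X i) (X j) * v j = y i := by
    intro i
    rw [← hinterp i, hf]
    simp [dotProduct]
  have key : ∀ i, ∀ α : ℝ, 0 < α → f (α • X i) = α * y i + ζ ^ 2 * (1 - α) * γ := by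
    intro i α hα
    rw [hf]
    have h1 : (fun j => K (α • X i) (X j)) ⬝ᵥ v
        = ∑ j, (α * K (X i) (X j) + ζ ^ 2 * (1 - α)) * v j := by
      simp only [dotProduct]
      exact Finset.sum_congr rfl fun j _ => by rw [hK _ _ _ hα]
    rw [h1]
    have h2 : ∑ j, (α * K (X i) (X j) + ζ ^ 2 * (1 - α)) * v j
        = α * (∑ j, K (X i) (X j) * v j) + ζ ^ 2 * (1 - α) * (∑ j, v j) := by
      rw [Finset.mul_sum, Finset.mul_sum, ← Finset.sum_add_distrib]
      exact Finset.sum_congr rfl fun j _ => by ring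
    rw [h2, hfx i, ← hγsum]
  have hr₂ : (0 : ℝ) < r₂ := hr₁.trans hr₁₂
  have hfP : ∀ i, f (P i) =
      if y i = 1 then (r₂ - ζ ^ 2 * (r₂ - r₁) * γ) / r₁
      else (ζ ^ 2 * (r₂ - r₁) * γ - r₁) / r₂ := by
    intro i
    rw [hP i]
    rcases hlab i with h | h
    · rw [if_pos h, if_pos h, key i _ (by positivity), h]
      field_simp
      ring
    · have h1 : y i ≠ 1 := by rw [h]; norm_num
      rw [if_neg h1, if_neg h1, key i _ (by positivity), h]
      field_simp
      ring
  have ht : r₁ / (ζ ^ 2 * (r₂ - r₁)) < r₂ / (ζ ^ 2 * (r₂ - r₁)) := by gcongr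
  have hsign : ∀ i, (Real.sign (f (P i)) = -(y i)) ↔
      (if y i = 1 then r₂ / (ζ ^ 2 * (r₂ - r₁)) < γ else r₁ / (ζ ^ 2 * (r₂ - r₁)) < γ) := by
    intro i
    have hne := hnz i
    rcases hlab i with h | h
    · have h1 : y i ≠ 1 → False := fun hh => hh h
      rw [hfP i, if_pos h] at hne ⊢
      rw [if_pos h, h]
      constructor
      · intro hs
        by_contra hlt
        push_neg at hlt
        have hle : ζ ^ 2 * (r₂ - r₁) * γ ≤ r₂ := by
          have := (le_div_iff₀ hc).mp hlt
          nlinarith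
        have hpos : 0 < (r₂ - ζ ^ 2 * (r₂ - r₁) * γ) / r₁ := by
          rcases lt_or_eq_of_le hle with hlt2 | heq
          · exact div_pos (by linarith) hr₁
          · exact absurd (by rw [heq, sub_self, zero_div]) hne
        rw [Real.sign_of_pos hpos] at hs
        norm_num at hs
      · intro hlt
        have hneg : (r₂ - ζ ^ 2 * (r₂ - r₁) * γ) / r₁ < 0 := by
          apply div_neg_of_neg_of_pos _ hr₁
          have := (div_lt_iff₀ hc).mp hlt
          nlinarith
        rw [Real.sign_of_neg hneg]
    · have h1 : y i ≠ 1 := by rw [h]; norm_num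
      rw [hfP i, if_neg h1] at hne ⊢
      rw [if_neg h1, h]
      constructor
      · intro hs
        by_contra hlt
        push_neg at hlt
        have hle : ζ ^ 2 * (r₂ - r₁) * γ ≤ r₁ := by
          have := (le_div_iff₀ hc).mp hlt
          nlinarith
        have hneg : (ζ ^ 2 * (r₂ - r₁) * γ - r₁) / r₂ < 0 := by
          rcases lt_or_eq_of_le hle with hlt2 | heq
          · apply div_neg_of_neg_of_pos _ hr₂; linarith
          · exact absurd (by rw [heq, sub_self, zero_div]) hne
        rw [Real.sign_of_neg hneg] at hs
        norm_num at hs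
      · intro hlt
        have hpos : 0 < (ζ ^ 2 * (r₂ - r₁) * γ - r₁) / r₂ := by
          apply div_pos _ hr₂
          have := (div_lt_iff₀ hc).mp hlt
          nlinarith
        rw [Real.sign_of_pos hpos]
        norm_num
  refine ⟨fun h1 => ?_, fun ⟨h2a, h2b⟩ => ?_, fun h3 => ?_⟩
  · have : (Finset.univ.filter fun i => Real.sign (f (P i)) = -(y i)) = ∅ := by
      apply Finset.filter_false_of_mem
      intro i _
      rw [hsign i]
      rcases hlab i with h | h
      · rw [if_pos h]; push_neg; linarith
      · rw [if_neg (by rw [h]; norm_num)]; push_neg; exact h1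
    rw [ha, this]
    simp
  · have : (Finset.univ.filter fun i => Real.sign (f (P i)) = -(y i))
        = (Finset.univ.filter fun i => y i = -1) := by
      apply Finset.filter_congr
      intro i _
      rw [hsign i]
      rcases hlab i with h | h
      · rw [if_pos h]
        simp only [h]
        constructor
        · intro hh; linarith
        · intro hh; norm_num at hh
      · rw [if_neg (by rw [h]; norm_num)]
        simp [h, h2a]
    rw [ha, this]
  · have : (Finset.univ.filter fun i => Real.sign (f (P i)) = -(y i)) = Finset.univ := by
      apply Finset.filter_true_of_mem
      intro i _
      rw [hsign i]
      rcases hlab i with h | h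
      · rw [if_pos h]; exact h3
      · rw [if_neg (by rw [h]; norm_num)]; linarith
    rw [ha, this, Finset.card_univ, Fintype.card_fin]
    field_simp
end

section
/- Let p be an isotropic distribution on ℝ^d (i.e., the conditional distribution of x given ‖x‖ = r is uniform on the sphere of radius r) with radial distribution p_R, and let K be a kernel of the form K(x, x') = ‖x‖‖x'‖·k(⟨x,x'⟩/(‖x‖‖x'‖)). If φ is an eigenfunction of the integral operator T_K^{p₁} with respect to the uniform measure p₁ on the unit sphere with eigenvalue λ, then x ↦ φ(x/‖x‖)·‖x‖ (suitably extended) is an eigenfunction of T_K^p with eigenvalue λ·E_{R∼p_R}[R²] — in particular the nonzero eigenvalues of T_K^p are those of T_K^{p₁} scaled by E[R²]. -/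
open MeasureTheory

/-!
Write `p` as the image of `p_R ⊗ p₁` under polar coordinates `(r, u) ↦ r • u`. For `x ≠ 0`,
homogeneity of `K` gives `K x (r • u) ψ (r • u) = ‖x‖ r² · K x̂ u φ u` with `x̂ = x / ‖x‖`, so the
integral against `p` splits as `‖x‖ E[R²] · ∫ K x̂ u φ u dp₁ = ‖x‖ E[R²] λ φ x̂ = λ E[R²] ψ x`.
-/

section ChangeOfVariables

variable {X Y F : Type*} [MeasurableSpace X] [MeasurableSpace Y]
  [NormedAddCommGroup F] [NormedSpace ℝ F]

/-- No measurability of `f` is needed: `f = (f ∘ T) ∘ S`, and `S` carries `μ.map T` back to `μ`. -/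
theorem integral_map_of_rightInverse {μ : Measure X} {T : X → Y} {S : Y → X}
    (hT : Measurable T) (hS : Measurable S) (hTS : Function.RightInverse S T)
    (hST : ∀ᵐ x ∂μ, S (T x) = x) (f : Y → F) :
    ∫ y, f y ∂μ.map T = ∫ x, f (T x) ∂μ := by
  by_cases hf : AEStronglyMeasurable (fun x => f (T x)) μ
  · have hμ : (μ.map T).map S = μ := by
      rw [Measure.map_map hS hT, Measure.map_congr (f := S ∘ T) (g := id) hST, Measure.map_id]
    rw [← hμ] at hf
    have hf' : AEStronglyMeasurable f (μ.map T) := by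
      simpa only [Function.comp_def, hTS _] using hf.comp_measurable hS
    exact integral_map hT.aemeasurable hf'
  · have hf' : ¬AEStronglyMeasurable f (μ.map T) := fun h => hf (h.comp_measurable hT)
    rw [integral_non_aestronglyMeasurable hf', integral_non_aestronglyMeasurable hf]

end ChangeOfVariables

section Polar

variable {E F : Type*} [NormedAddCommGroup E] [NormedSpace ℝ E] [MeasurableSpace E] [BorelSpace E]
  [NormedAddCommGroup F] [NormedSpace ℝ F]

theorem integral_map_smul_of_ae_pos_of_norm_eq_one {μ : Measure (ℝ × E)}
    (hμ : ∀ᵐ ru ∂μ, 0 < ru.1 ∧ ‖ru.2‖ = 1) (f : E → F) :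
    ∫ z, f z ∂μ.map (fun ru => ru.1 • ru.2) = ∫ ru, f (ru.1 • ru.2) ∂μ := by
  refine integral_map_of_rightInverse (S := fun z => (‖z‖, ‖z‖⁻¹ • z))
    (measurable_fst.smul measurable_snd)
    (measurable_norm.prodMk (measurable_norm.inv.smul measurable_id)) (fun z => ?_) ?_ f
  · rcases eq_or_ne z 0 with rfl | hz
    · simp
    · exact smul_inv_smul₀ (norm_ne_zero_iff.mpr hz) z
  · filter_upwards [hμ] with ⟨r, u⟩ ⟨hr, hu⟩
    simp [norm_smul, hu, abs_of_pos hr, smul_smul, hr.ne']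

end Polar

section Kernel

variable {E : Type*} [NormedAddCommGroup E] [InnerProductSpace ℝ E]

theorem dotProductKernel_smul_smul {K : E → E → ℝ} {k : ℝ → ℝ}
    (hK : ∀ x x' : E, x ≠ 0 → x' ≠ 0 → K x x' = ‖x‖ * ‖x'‖ * k (inner ℝ x x' / (‖x‖ * ‖x'‖)))
    {x x' : E} (hx : x ≠ 0) (hx' : x' ≠ 0) {a b : ℝ} (ha : 0 < a) (hb : 0 < b) :
    K (a • x) (b • x') = a * b * K x x' := by
  have hxn : ‖x‖ ≠ 0 := norm_ne_zero_iff.mpr hx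
  have hxn' : ‖x'‖ ≠ 0 := norm_ne_zero_iff.mpr hx'
  rw [hK _ _ (smul_ne_zero ha.ne' hx) (smul_ne_zero hb.ne' hx'), hK x x' hx hx',
    norm_smul, norm_smul, real_inner_smul_left, real_inner_smul_right,
    Real.norm_of_nonneg ha.le, Real.norm_of_nonneg hb.le]
  field_simp

end Kernel

theorem stmt_17_general {d : ℕ}
    (K : EuclideanSpace ℝ (Fin d) → EuclideanSpace ℝ (Fin d) → ℝ) (k : ℝ → ℝ)
    (hK : ∀ x x' : EuclideanSpace ℝ (Fin d), x ≠ 0 → x' ≠ 0 →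
      K x x' = ‖x‖ * ‖x'‖ * k ((inner ℝ x x' : ℝ) / (‖x‖ * ‖x'‖)))
    (p₁ : Measure (EuclideanSpace ℝ (Fin d))) [IsProbabilityMeasure p₁]
    (hp₁ : ∀ᵐ z ∂p₁, ‖z‖ = 1)
    (pR : Measure ℝ) [IsProbabilityMeasure pR]
    (hpR : ∀ᵐ r ∂pR, 0 < r)
    (p : Measure (EuclideanSpace ℝ (Fin d)))
    (hp : p = Measure.map (fun ru : ℝ × EuclideanSpace ℝ (Fin d) => ru.1 • ru.2)
      (pR.prod p₁))
    (φ : EuclideanSpace ℝ (Fin d) → ℝ) (lam : ℝ)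
    (heig : ∀ x : EuclideanSpace ℝ (Fin d), ‖x‖ = 1 →
      ∫ z, K x z * φ z ∂p₁ = lam * φ x)
    (ψ : EuclideanSpace ℝ (Fin d) → ℝ)
    (hψ : ∀ x : EuclideanSpace ℝ (Fin d), x ≠ 0 → ψ x = φ (‖x‖⁻¹ • x) * ‖x‖) :
    ∀ x : EuclideanSpace ℝ (Fin d), x ≠ 0 →
      ∫ z, K x z * ψ z ∂p = (lam * ∫ r, r ^ 2 ∂pR) * ψ x := by
  intro x hx
  set x₀ := ‖x‖⁻¹ • x
  have hx₀ : ‖x₀‖ = 1 := norm_smul_inv_norm hx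
  have hpolar : ∀ᵐ ru ∂pR.prod p₁, 0 < ru.1 ∧ ‖ru.2‖ = 1 :=
    (Measure.quasiMeasurePreserving_fst.ae hpR).and (Measure.quasiMeasurePreserving_snd.ae hp₁)
  have hsplit : ∀ᵐ ru ∂pR.prod p₁, K x (ru.1 • ru.2) * ψ (ru.1 • ru.2)
      = (‖x‖ * ru.1 ^ 2) * (K x₀ ru.2 * φ ru.2) := by
    filter_upwards [hpolar] with ⟨r, u⟩ ⟨hr, hu⟩
    have hu0 : u ≠ 0 := norm_ne_zero_iff.mp (by rw [hu]; exact one_ne_zero)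
    have hx₀0 : x₀ ≠ 0 := norm_ne_zero_iff.mp (by rw [hx₀]; exact one_ne_zero)
    have hψru : ψ (r • u) = φ u * r := by
      rw [hψ _ (smul_ne_zero hr.ne' hu0), norm_smul, hu, Real.norm_of_nonneg hr.le, mul_one,
        smul_smul, inv_mul_cancel₀ hr.ne', one_smul]
    have hKru : K x (r • u) = ‖x‖ * r * K x₀ u := by
      conv_lhs => rw [← smul_inv_smul₀ (norm_ne_zero_iff.mpr hx) x]
      exact dotProductKernel_smul_smul hK hx₀0 hu0 (norm_pos_iff.mpr hx) hr
    rw [hψru, hKru]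
    ring
  calc ∫ z, K x z * ψ z ∂p
      = ∫ ru, K x (ru.1 • ru.2) * ψ (ru.1 • ru.2) ∂pR.prod p₁ := by
        rw [hp]; exact integral_map_smul_of_ae_pos_of_norm_eq_one hpolar _
    _ = ∫ ru, (‖x‖ * ru.1 ^ 2) * (K x₀ ru.2 * φ ru.2) ∂pR.prod p₁ := integral_congr_ae hsplit
    _ = (∫ r, ‖x‖ * r ^ 2 ∂pR) * ∫ u, K x₀ u * φ u ∂p₁ := by
        exact integral_prod_mul (fun r => ‖x‖ * r ^ 2) fun u => K x₀ u * φ u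
    _ = (lam * ∫ r, r ^ 2 ∂pR) * ψ x := by
        rw [integral_const_mul, heig x₀ hx₀, hψ x hx]
        ring

/-- Eigenfunctions of the integral operator of a homogeneous dot-product kernel over an
isotropic measure are obtained from those over the unit sphere, with eigenvalues scaled
by `E[R²]`. -/
theorem stmt_17 {d : ℕ}
    (K : EuclideanSpace ℝ (Fin d) → EuclideanSpace ℝ (Fin d) → ℝ) (k : ℝ → ℝ)
    (hK : ∀ x x' : EuclideanSpace ℝ (Fin d), x ≠ 0 → x' ≠ 0 →
      K x x' = ‖x‖ * ‖x'‖ * k ((inner ℝ x x' : ℝ) / (‖x‖ * ‖x'‖)))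
    (p₁ : Measure (EuclideanSpace ℝ (Fin d))) [IsProbabilityMeasure p₁]
    (hp₁ : ∀ᵐ z ∂p₁, ‖z‖ = 1)
    (pR : Measure ℝ) [IsProbabilityMeasure pR]
    (hpR : ∀ᵐ r ∂pR, 0 < r)
    (p : Measure (EuclideanSpace ℝ (Fin d)))
    (hp : p = Measure.map (fun ru : ℝ × EuclideanSpace ℝ (Fin d) => ru.1 • ru.2)
      (pR.prod p₁))
    (φ : EuclideanSpace ℝ (Fin d) → ℝ) (lam : ℝ)
    (heig : ∀ x : EuclideanSpace ℝ (Fin d), ‖x‖ = 1 →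
      ∫ z, K x z * φ z ∂p₁ = lam * φ x)
    (ψ : EuclideanSpace ℝ (Fin d) → ℝ)
    (hψ : ∀ x : EuclideanSpace ℝ (Fin d), x ≠ 0 → ψ x = φ (‖x‖⁻¹ • x) * ‖x‖)
    (hmom : 0 < ∫ r, r ^ 2 ∂pR) :
    ∀ x : EuclideanSpace ℝ (Fin d), x ≠ 0 →
      ∫ z, K x z * ψ z ∂p = (lam * ∫ r, r ^ 2 ∂pR) * ψ x :=
  stmt_17_general K k hK p₁ hp₁ pR hpR p hp φ lam heig ψ hψ
end
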